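/- Equivalently in arithmetic form: let m ≥ 1, L = lcm(2,…,m), and r ≥ 1. Given natural numbers c₁,…,c_m with Σ i·c_i ≥ (r + m − 1)·L, there exist natural numbers d₁,…,d_m with d_i ≤ c_i for all i and Σ i·d_i = r·L. -/

import Mathlib

/-!
Write `c i = b i * (L / i) + e i` with `i * e i < L`. Each block of `L / i` copies of the weight `i`
weighs exactly `L`, so if `∑ b i ≥ r` one picks `r` of the blocks. Otherwise `∑ b i ≤ r - 1` and the
total weight is less than `(∑ b i) * L + m * L ≤ (r + m - 1) * L`, contradicting the hypothesis.
-/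

open Finset

theorem Finset.exists_le_sum_eq_of_le_sum {ι : Type*} (s : Finset ι) (b : ι → ℕ)
    {r : ℕ} (hr : r ≤ ∑ i ∈ s, b i) :
    ∃ a : ι → ℕ, (∀ i, a i ≤ b i) ∧ ∑ i ∈ s, a i = r := by
  classical
  induction s using Finset.induction_on generalizing r with
  | empty => exact ⟨0, fun i => Nat.zero_le _, by simp_all⟩
  | insert x s hx ih =>
    rw [sum_insert hx] at hr
    obtain ⟨a, hab, hsum⟩ := ih (min_le_right r (∑ i ∈ s, b i))
    refine ⟨Function.update a x (r - min r (∑ i ∈ s, b i)), fun i => ?_, ?_⟩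
    · rcases eq_or_ne i x with rfl | hne
      · simp only [Function.update_self]; omega
      · simpa [Function.update_of_ne hne] using hab i
    · rw [sum_insert hx, Function.update_self, sum_update_of_notMem hx, hsum]
      omega

theorem Nat.mul_lt_div_add_one_mul_of_dvd {w L : ℕ} (c : ℕ) (hw : w ∣ L) (hL : 0 < L) :
    w * c < (c / (L / w) + 1) * L := by
  have hw0 : 0 < w := Nat.pos_of_dvd_of_pos hw hL
  have hq : 0 < L / w := Nat.div_pos (Nat.le_of_dvd hL hw) hw0
  calc w * c < w * (c / (L / w) * (L / w) + L / w) :=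
        Nat.mul_lt_mul_of_pos_left (Nat.lt_div_mul_add hq) hw0
    _ = (c / (L / w) + 1) * (w * (L / w)) := by ring
    _ = (c / (L / w) + 1) * L := by rw [Nat.mul_div_cancel' hw]

theorem Finset.exists_le_weighted_sum_eq_mul {ι : Type*} {s : Finset ι} (hs : s.Nonempty)
    {w : ι → ℕ} {L : ℕ} (hL : 0 < L) (hw : ∀ i ∈ s, w i ∣ L) {r : ℕ} (c : ι → ℕ)
    (h : (r + #s - 1) * L ≤ ∑ i ∈ s, w i * c i) :
    ∃ d : ι → ℕ, (∀ i, d i ≤ c i) ∧ ∑ i ∈ s, w i * d i = r * L := by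
  set b : ι → ℕ := fun i => c i / (L / w i)
  have hb : r ≤ ∑ i ∈ s, b i := by
    by_contra! hlt
    have hcard : 0 < #s := hs.card_pos
    have hweight : ∑ i ∈ s, w i * c i < (∑ i ∈ s, b i + #s) * L := calc
      ∑ i ∈ s, w i * c i < ∑ i ∈ s, (b i + 1) * L :=
        sum_lt_sum_of_nonempty hs fun i hi => Nat.mul_lt_div_add_one_mul_of_dvd _ (hw i hi) hL
      _ = (∑ i ∈ s, b i + #s) * L := by rw [← sum_mul, sum_add_distrib, card_eq_sum_ones]
    have hbound : (∑ i ∈ s, b i + #s) * L ≤ (r + #s - 1) * L := Nat.mul_le_mul_right _ (by omega)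
    omega
  obtain ⟨a, hab, hsum⟩ := s.exists_le_sum_eq_of_le_sum b hb
  refine ⟨fun i => a i * (L / w i), fun i => ?_, ?_⟩
  · exact (Nat.mul_le_mul_right _ (hab i)).trans (Nat.div_mul_le_self _ _)
  · calc ∑ i ∈ s, w i * (a i * (L / w i)) = ∑ i ∈ s, a i * L :=
          sum_congr rfl fun i hi => by rw [mul_left_comm, Nat.mul_div_cancel' (hw i hi)]
      _ = r * L := by rw [← sum_mul, hsum]

theorem dvd_lcm_Icc_two {i m : ℕ} (hi : i ∈ Icc 1 m) : i ∣ (Icc 2 m).lcm id := by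
  rcases (mem_Icc.mp hi).1.eq_or_lt with rfl | h1
  · exact one_dvd _
  · exact dvd_lcm (mem_Icc.mpr ⟨h1, (mem_Icc.mp hi).2⟩)

theorem lcm_Icc_two_pos (m : ℕ) : 0 < (Icc 2 m).lcm id :=
  Nat.pos_of_ne_zero fun h => by
    obtain ⟨i, hi, hi0⟩ := lcm_eq_zero_iff.mp h
    simp_all

theorem stmt_3_general (m r : ℕ) (hm : 1 ≤ m)
    (L : ℕ) (hL : L = (Finset.Icc 2 m).lcm id)
    (c : ℕ → ℕ)
    (h : (r + m - 1) * L ≤ ∑ i ∈ Finset.Icc 1 m, i * c i) :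
    ∃ d : ℕ → ℕ, (∀ i, d i ≤ c i) ∧
      ∑ i ∈ Finset.Icc 1 m, i * d i = r * L := by
  subst hL
  refine exists_le_weighted_sum_eq_mul (nonempty_Icc.mpr hm) (lcm_Icc_two_pos m)
    (fun i hi => dvd_lcm_Icc_two hi) c ?_
  rwa [Nat.card_Icc, Nat.add_sub_cancel]

/-- Arithmetic form: let `m ≥ 1`, `L = lcm(2,…,m)`, `r ≥ 1`. Given naturals
`c₁,…,c_m` with `∑ i·c_i ≥ (r + m − 1)·L`, there exist naturals `d_i ≤ c_i`
with `∑ i·d_i = r·L`. -/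
theorem stmt_3 (m r : ℕ) (hm : 1 ≤ m) (hr : 1 ≤ r)
    (L : ℕ) (hL : L = (Finset.Icc 2 m).lcm id)
    (c : ℕ → ℕ)
    (h : (r + m - 1) * L ≤ ∑ i ∈ Finset.Icc 1 m, i * c i) :
    ∃ d : ℕ → ℕ, (∀ i, d i ≤ c i) ∧
      ∑ i ∈ Finset.Icc 1 m, i * d i = r * L :=
  stmt_3_general m r hm L hL c h
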